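/- With $\pi : C \to P_1[n,k]$ the bijection between increasing sequences and lattice paths, and $\Omega : \mathbb{Z}^{kk'} \to B^{k,\infty}$ the bijection $\Omega(x)_{ji} = x^{(k-j+1)}_i - x^{(k-j+1)}_{i-1}$, one has for every $x \in \mathbb{Z}^{kk'}$ and $c \in C$: $\Delta_{\Omega(x)}(c) = -\,ux(\pi(c))$, where $ux(p) = \sum_{s} (x^{(l)}_m - x^{(l)}_{m+1})$ is the sum over horizontal strips $s = (l,m)$–$(l,m+1)$ of the path $p$. -/

import Mathlib

attribute [local instance] Classical.propDecidable

noncomputable section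

/-- Validity of a lattice index `(l,m)` of `L₁[n,k]`. -/
def L1idx (n k l m : ℕ) : Prop := 1 ≤ l ∧ l ≤ k ∧ k < l + m ∧ l + m ≤ n + 1

/-- `ℤ^{kk'}`, realized as integer functions supported on the index set of `L₁[n,k]`
(so that `x^{(l)}_m = 0` outside the index range, as required). -/
def ZLat (n k : ℕ) : Set (ℕ → ℕ → ℤ) :=
  {x | ∀ l m, ¬ L1idx n k l m → x l m = 0}

/-- The map `Ω`, `Ω(x)_{ji} = x^{(k-j+1)}_i - x^{(k-j+1)}_{i-1}`. -/
def OmegaMap (k : ℕ) (x : ℕ → ℕ → ℤ) : ℕ → ℕ → ℤ := fun j i =>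
  if 1 ≤ j ∧ j ≤ k then x (k - j + 1) i - x (k - j + 1) (i - 1) else 0

/-- The set `C = {(c₀,…,c_k) : 1 = c₀ < c₁ < ⋯ < c_k ≤ n+1}`. -/
def Cfin (n k : ℕ) : Finset (Fin (k + 1) → Fin (n + 2)) :=
  Finset.univ.filter fun c => (c 0 : ℕ) = 1 ∧ StrictMono c

/-- `Δ_b(c) = ∑_{j=1}^k ∑_{c_{j-1} < i < c_j} b_{ji}`. -/
def DeltaF (n k : ℕ) (b : ℕ → ℕ → ℤ) (c : Fin (k + 1) → Fin (n + 2)) : ℤ :=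
  ∑ j : Fin k, ∑ i ∈ Finset.Ioo (c j.castSucc : ℕ) (c j.succ : ℕ), b ((j : ℕ) + 1) i

/-- The tropical path weight `ux(π(c)) = ∑ (x^{(l)}_m - x^{(l)}_{m+1})`, summed over
the horizontal strips of the path `π(c)`; on the run at level `k - j + 1`
(from column `c_{j-1}` to column `c_j - 1`) this telescopes to
`x^{(k-j+1)}_{c_{j-1}} - x^{(k-j+1)}_{c_j - 1}`. -/
def uxwt (n k : ℕ) (x : ℕ → ℕ → ℤ) (c : Fin (k + 1) → Fin (n + 2)) : ℤ :=
  ∑ j : Fin k,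
    (x (k - (j : ℕ)) (c j.castSucc) - x (k - (j : ℕ)) ((c j.succ : ℕ) - 1))

theorem Finset.sum_Ioo_sub_pred {G : Type*} [AddCommGroup G] (f : ℕ → G) {a b : ℕ}
    (hab : a < b) : ∑ i ∈ Ioo a b, (f i - f (i - 1)) = f (b - 1) - f a := by
  obtain ⟨d, rfl⟩ : ∃ d, b = d + 1 := ⟨b - 1, by omega⟩
  rw [← Finset.Ico_add_one_left_eq_Ioo, ← Finset.sum_Ico_add' (fun i => f i - f (i - 1)) a d 1]
  simpa using Finset.sum_Ico_sub f (Nat.le_of_lt_succ hab)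

theorem OmegaMap_succ_of_lt {k j : ℕ} (hj : j < k) (x : ℕ → ℕ → ℤ) (i : ℕ) :
    OmegaMap k x (j + 1) i = x (k - j) i - x (k - j) (i - 1) := by
  rw [OmegaMap, if_pos ⟨Nat.le_add_left 1 j, hj⟩, show k - (j + 1) + 1 = k - j by omega]

theorem stmt9_general (n k : ℕ)
    (x : ℕ → ℕ → ℤ) :
    ∀ c ∈ Cfin n k, DeltaF n k (OmegaMap k x) c = - uxwt n k x c := by
  intro c hc
  have hmono : StrictMono c := (Finset.mem_filter.mp hc).2.2
  rw [DeltaF, uxwt, ← Finset.sum_neg_distrib]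
  refine Finset.sum_congr rfl fun j _ => ?_
  simp only [OmegaMap_succ_of_lt j.isLt]
  rw [Finset.sum_Ioo_sub_pred _ (hmono j.castSucc_lt_succ), neg_sub]

/-- `Δ_{Ω(x)}(c) = - ux(π(c))` for every `x ∈ ℤ^{kk'}` and `c ∈ C`. -/
theorem stmt9 (n k : ℕ) (hk : 1 ≤ k) (hkn : k ≤ n)
    (x : ℕ → ℕ → ℤ) (hx : x ∈ ZLat n k) :
    ∀ c ∈ Cfin n k, DeltaF n k (OmegaMap k x) c = - uxwt n k x c :=
  stmt9_general n k x
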